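/- Let G' , α, β be the graph and colorings constructed from a graph G on n vertices and an integer t ≥ 1, and let k = n + t + 1. If G has an independent set of size at least t − 1, then there exists a k-recoloring sequence for G' from α to β of length at most 2t + 2t². -/

import Mathlib

/-- A `k`-coloring of `G`: colors in `{1,…,k}`, adjacent vertices differently colored. -/
def IsKColoring {V : Type*} (G : SimpleGraph V) (k : ℕ) (γ : V → ℕ) : Prop :=
  (∀ v, γ v ∈ Finset.Icc 1 k) ∧ ∀ u v, G.Adj u v → γ u ≠ γ v

/-- A `k`-recoloring sequence `seq 0, …, seq ℓ` from `α` to `β`: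
all are `k`-colorings, and consecutive colorings differ on at most one vertex. -/
def IsRecolSeq {V : Type*} (G : SimpleGraph V) (k : ℕ) (seq : ℕ → V → ℕ)
    (ℓ : ℕ) (α β : V → ℕ) : Prop :=
  seq 0 = α ∧ seq ℓ = β ∧ (∀ i ≤ ℓ, IsKColoring G k (seq i)) ∧
  ∀ i < ℓ, ∀ u w, seq i u ≠ seq (i+1) u → seq i w ≠ seq (i+1) w → u = w

/-- The graph `B_k`: vertices `b^i_j` for `i,j ∈ {1,…,k}`, with `b^i_j ~ b^{i'}_{j'}`
iff `i ≠ i'` and `j ≠ j'` (the complement of `K_k □ K_k`). -/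
def Bgraph (k : ℕ) : SimpleGraph (Fin k × Fin k) where
  Adj p q := p.1 ≠ q.1 ∧ p.2 ≠ q.2
  symm := ⟨fun p q h => ⟨h.1.symm, h.2.symm⟩⟩
  loopless := ⟨fun p h => h.1 rfl⟩

/-- The coloring `α^k` of `B_k`: `α^k(b^i_j) = i`. -/
def alphak (k : ℕ) : Fin k × Fin k → ℕ := fun p => p.1.val + 1

/-- The coloring `β^k` of `B_k`: `β^k(b^i_j) = j`. -/
def betak (k : ℕ) : Fin k × Fin k → ℕ := fun p => p.2.val + 1

/-- Vertices of the graph `G'` of the W[1]-hardness construction: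
`g i` are the vertices `g_1,…,g_n` (copies of `v_1,…,v_n`), `b i j` are the vertices of
`V_B = {b^i_j : i,j ∈ {1,…,t}}`, and `c m s` is the `s`-th vertex of the color-guard set
`C_{m+1}` (each of the `n+t+1` sets `C_1,…,C_{n+t+1}` has `2t + 2t²` vertices). -/
inductive GV (n t : ℕ) : Type
  | g : Fin n → GV n t
  | b : Fin t → Fin t → GV n t
  | c : Fin (n + t + 1) → Fin (2 * t + 2 * t ^ 2) → GV n t
deriving DecidableEq

/-- The graph `G'` of the W[1]-hardness construction, built from `G`. -/
def Wgraph (n t : ℕ) (G : SimpleGraph (Fin n)) : SimpleGraph (GV n t) where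
  Adj w w' :=
    match w, w' with
    | .g p, .g q => G.Adj p q
    | .g _, .b _ _ => True
    | .b _ _, .g _ => True
    | .b i j, .b i' j' => i ≠ i' ∧ j ≠ j'
    | .g i, .c m _ => m.val ≠ i.val ∧ m.val ≠ n + t
    | .c m _, .g i => m.val ≠ i.val ∧ m.val ≠ n + t
    | .b _ _, .c m _ => m.val = n + t
    | .c m _, .b _ _ => m.val = n + t
    | .c _ _, .c _ _ => False
  symm := by
    constructor
    rintro (p | ⟨i, j⟩ | ⟨m, s⟩) (q | ⟨i', j'⟩ | ⟨m', s'⟩) h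
    · exact G.adj_symm h
    · trivial
    · exact h
    · trivial
    · exact ⟨fun e => h.1 e.symm, fun e => h.2 e.symm⟩
    · exact h
    · exact h
    · exact h
    · exact h
  loopless := by
    constructor
    rintro (p | ⟨i, j⟩ | ⟨m, s⟩) h
    · exact G.loopless.irrefl p h
    · exact h.1 rfl
    · exact h

/-- The `(n+t+1)`-coloring `α` of `G'`: `α(g_i) = i`, `α(c) = i` for `c ∈ C_i`,
`α(b^i_j) = n + i`. -/
def Walpha (n t : ℕ) : GV n t → ℕ
  | .g i => i.val + 1
  | .b i _ => n + i.val + 1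
  | .c m _ => m.val + 1

/-- The `(n+t+1)`-coloring `β` of `G'`: agrees with `α` on `V_G ∪ V_C`, and
`β(b^i_j) = n + j`. -/
def Wbeta (n t : ℕ) : GV n t → ℕ
  | .g i => i.val + 1
  | .b _ j => n + j.val + 1
  | .c m _ => m.val + 1

/-! Write `t = s + 1` and let `e : Fin s → Fin n` enumerate `s` independent vertices of `G`.
Park `g_{e 0}, …, g_{e (s-1)}` one by one on the colour `k = n + t + 1` of `C_{n+t+1}` (no `b`
ever uses it, and parked vertices are pairwise non-adjacent); this frees the colours `e j + 1`,
which serve as spare colours for the columns `j < s` of `V_B`, while the last column uses `n + t`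
itself. Then move every `b^i_j`, in column-major order, first to the spare colour of its column
and, in a second sweep in the same order, to its target `n + j + 1`; finally unpark the `g`'s.
Every vertex moves at its own time steps, `2t² + 2(t-1)` in all. -/

namespace Wgraph

/-- The position of `b^i_j` in column-major order. -/
def bRank {t : ℕ} (i j : Fin t) : ℕ := i + t * j

lemma bRank_lt {t : ℕ} (i j : Fin t) : bRank i j < t ^ 2 :=
  calc bRank i j < t + t * j := Nat.add_lt_add_right i.isLt _
    _ = t * (j + 1) := by ring
    _ ≤ t * t := Nat.mul_le_mul_left _ j.isLt
    _ = t ^ 2 := (sq t).symm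

lemma bRank_lt_bRank {t : ℕ} (i i' : Fin t) {j j' : Fin t} (h : j < j') :
    bRank i j < bRank i' j' :=
  calc bRank i j < t + t * j := Nat.add_lt_add_right i.isLt _
    _ = t * (j + 1) := by ring
    _ ≤ t * j' := Nat.mul_le_mul_left _ h
    _ ≤ bRank i' j' := Nat.le_add_left _ _

lemma bRank_injective {t : ℕ} {i i' j j' : Fin t} (h : bRank i j = bRank i' j') :
    i = i' ∧ j = j' := by
  have hpos : 0 < t := Fin.pos i
  have column (i j : Fin t) : bRank i j / t = j := by
    rw [bRank, Nat.add_mul_div_left _ _ hpos, Nat.div_eq_of_lt i.isLt, zero_add]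
  have hj : j = j' := Fin.ext (by rw [← column i j, ← column i' j', h])
  subst hj
  exact ⟨Fin.ext (by simpa [bRank] using h), rfl⟩

variable {n s : ℕ} (e : Fin s → Fin n)

/-- The colour taken by the column `j` of `V_B` between its two sweeps. -/
def spare (j : Fin (s + 1)) : ℕ := if h : (j : ℕ) < s then e ⟨j, h⟩ + 1 else n + s + 1

lemma spare_cases (j : Fin (s + 1)) :
    ((j : ℕ) < s ∧ 1 ≤ spare e j ∧ spare e j ≤ n) ∨ ((j : ℕ) = s ∧ spare e j = n + s + 1) := by
  unfold spare; split_ifs <;> omega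

lemma spare_injective (he : Function.Injective e) : Function.Injective (spare e) := by
  intro j j' h
  unfold spare at h
  split_ifs at h with hj hj'
  · have := he (Fin.ext (Nat.succ_injective h) : e ⟨j, hj⟩ = e ⟨j', hj'⟩)
    exact Fin.ext (by simpa using this)
  all_goals omega

/-- `g_p` is parked on the colour `n + s + 2` at time `m`. -/
def Parked (m : ℕ) (p : Fin n) : Prop :=
  ∃ j : Fin s, e j = p ∧ (j : ℕ) < m ∧ m ≤ s + 2 * (s + 1) ^ 2 + j

open Classical in
noncomputable def schedule (m : ℕ) : GV n (s + 1) → ℕ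
  | .g p => if Parked e m p then n + s + 2 else p + 1
  | .b i j =>
      if m ≤ s + bRank i j then n + i + 1
      else if m ≤ s + (s + 1) ^ 2 + bRank i j then spare e j
      else n + j + 1
  | .c c _ => c + 1

lemma schedule_zero : schedule e 0 = Walpha n (s + 1) := by
  funext v
  rcases v with p | ⟨i, j⟩ | ⟨c, x⟩
  · simp [schedule, Walpha, Parked]
  · simp [schedule, Walpha]
  · rfl

lemma schedule_end : schedule e (2 * s + 2 * (s + 1) ^ 2) = Wbeta n (s + 1) := by
  funext v
  rcases v with p | ⟨i, j⟩ | ⟨c, x⟩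
  · have hpark : ¬ Parked e (2 * s + 2 * (s + 1) ^ 2) p := by
      rintro ⟨j, -, -, hj⟩
      omega
    simp [schedule, Wbeta, hpark]
  · have := bRank_lt i j
    simp only [schedule, Wbeta]
    rw [if_neg (by omega), if_neg (by omega)]
  · rfl

section Proper

variable {e} {G : SimpleGraph (Fin n)} {m : ℕ}

lemma schedule_mem_Icc (v : GV n (s + 1)) :
    schedule e m v ∈ Finset.Icc 1 (n + (s + 1) + 1) := by
  rw [Finset.mem_Icc]
  rcases v with p | ⟨i, j⟩ | ⟨c, x⟩ <;> simp only [schedule]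
  · split_ifs <;> omega
  · have := spare_cases e j
    split_ifs <;> omega
  · omega

lemma schedule_g_ne_g (hind : ∀ j j', ¬ G.Adj (e j) (e j')) {p q : Fin n} (hpq : G.Adj p q) :
    schedule e m (.g p) ≠ schedule e m (.g q) := by
  simp only [schedule]
  split_ifs with hp hq hq
  · obtain ⟨j, rfl, -⟩ := hp
    obtain ⟨j', rfl, -⟩ := hq
    exact absurd hpq (hind j j')
  all_goals have := G.ne_of_adj hpq; omega

lemma schedule_g_ne_b (p : Fin n) (i j : Fin (s + 1)) :
    schedule e m (.g p) ≠ schedule e m (.b i j) := by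
  have hspare := spare_cases e j
  have := bRank_lt i j
  simp only [schedule]
  split_ifs with hp h₀ h₁ <;> try omega
  -- `g_{e j}` is parked throughout the time the column `j < s` spends on its spare colour
  intro hpj
  rcases hspare with ⟨hj, -⟩ | ⟨-, hspare⟩
  · refine hp ⟨⟨j, hj⟩, Fin.ext ?_, by omega, by omega⟩
    simp only [spare, dif_pos hj] at hpj
    omega
  · omega

lemma schedule_g_ne_c {p : Fin n} {c : Fin (n + (s + 1) + 1)}
    (x : Fin (2 * (s + 1) + 2 * (s + 1) ^ 2)) (hc : (c : ℕ) ≠ p ∧ (c : ℕ) ≠ n + (s + 1)) :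
    schedule e m (.g p) ≠ schedule e m (.c c x) := by
  simp only [schedule]
  split_ifs <;> omega

lemma schedule_b_ne_b (he : Function.Injective e) {i i' j j' : Fin (s + 1)}
    (hi : i ≠ i') (hj : j ≠ j') :
    schedule e m (.b i j) ≠ schedule e m (.b i' j') := by
  have hi := Fin.val_ne_of_ne hi
  have hj' := Fin.val_ne_of_ne hj
  have := (spare_injective e he).ne hj
  have := spare_cases e j
  have := spare_cases e j'
  have := bRank_lt i j
  have := bRank_lt i' j'
  simp only [schedule]
  rcases lt_or_gt_of_ne hj with hlt | hlt
  · have := bRank_lt_bRank i i' hlt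
    split_ifs <;> omega
  · have := bRank_lt_bRank i' i hlt
    split_ifs <;> omega

lemma schedule_b_ne_c (i j : Fin (s + 1)) {c : Fin (n + (s + 1) + 1)}
    (x : Fin (2 * (s + 1) + 2 * (s + 1) ^ 2)) (hc : (c : ℕ) = n + (s + 1)) :
    schedule e m (.b i j) ≠ schedule e m (.c c x) := by
  have := spare_cases e j
  simp only [schedule]
  split_ifs <;> omega

lemma isKColoring_schedule (he : Function.Injective e) (hind : ∀ j j', ¬ G.Adj (e j) (e j'))
    (m : ℕ) : IsKColoring (Wgraph n (s + 1) G) (n + (s + 1) + 1) (schedule e m) := by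
  refine ⟨schedule_mem_Icc, ?_⟩
  rintro (p | ⟨i, j⟩ | ⟨c, x⟩) (q | ⟨i', j'⟩ | ⟨c', x'⟩) hadj
  · exact schedule_g_ne_g hind hadj
  · exact schedule_g_ne_b p i' j'
  · exact schedule_g_ne_c x' hadj
  · exact (schedule_g_ne_b q i j).symm
  · exact schedule_b_ne_b he hadj.1 hadj.2
  · exact schedule_b_ne_c i j x' hadj
  · exact (schedule_g_ne_c x ⟨hadj.1, hadj.2⟩).symm
  · exact (schedule_b_ne_c i' j' x hadj).symm
  · exact hadj.elim

end Proper

section Moves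

variable {e} {m : ℕ}

lemma eq_of_schedule_g_ne {p : Fin n} (h : schedule e m (.g p) ≠ schedule e (m + 1) (.g p)) :
    ∃ j : Fin s, e j = p ∧ (m = j ∨ m = s + 2 * (s + 1) ^ 2 + j) := by
  simp only [schedule] at h
  split_ifs at h with hm hm' hm'
  · exact absurd rfl h
  · obtain ⟨j, hj, hjm⟩ := hm
    refine ⟨j, hj, by_contra fun hne => hm' ⟨j, hj, by omega, by omega⟩⟩
  · obtain ⟨j, hj, hjm⟩ := hm'
    refine ⟨j, hj, by_contra fun hne => hm ⟨j, hj, by omega, by omega⟩⟩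
  · exact absurd rfl h

lemma eq_of_schedule_b_ne {i j : Fin (s + 1)}
    (h : schedule e m (.b i j) ≠ schedule e (m + 1) (.b i j)) :
    m = s + bRank i j ∨ m = s + (s + 1) ^ 2 + bRank i j := by
  simp only [schedule] at h
  split_ifs at h <;> omega

/-- The four sweeps occupy the disjoint time windows `[0, s)`, `[s, s + (s+1)²)`,
`[s + (s+1)², s + 2(s+1)²)` and `[s + 2(s+1)², 2s + 2(s+1)²)`. -/
lemma eq_of_schedule_ne {u w : GV n (s + 1)}
    (hu : schedule e m u ≠ schedule e (m + 1) u) (hw : schedule e m w ≠ schedule e (m + 1) w) :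
    u = w := by
  rcases u with p | ⟨i, j⟩ | ⟨c, x⟩ <;> rcases w with q | ⟨i', j'⟩ | ⟨c', x'⟩
  all_goals try exact (hu rfl).elim
  all_goals try exact (hw rfl).elim
  · obtain ⟨j, rfl, hj⟩ := eq_of_schedule_g_ne hu
    obtain ⟨j', rfl, hj'⟩ := eq_of_schedule_g_ne hw
    obtain rfl : j = j' := Fin.ext (by omega)
    rfl
  · obtain ⟨k, -, hk⟩ := eq_of_schedule_g_ne hu
    have := eq_of_schedule_b_ne hw
    have := bRank_lt i' j'
    omega
  · have := eq_of_schedule_b_ne hu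
    obtain ⟨k, -, hk⟩ := eq_of_schedule_g_ne hw
    have := bRank_lt i j
    omega
  · have := eq_of_schedule_b_ne hu
    have := eq_of_schedule_b_ne hw
    have := bRank_lt i j
    have := bRank_lt i' j'
    obtain ⟨rfl, rfl⟩ := bRank_injective (i := i) (j := j) (i' := i') (j' := j') (by omega)
    rfl

end Moves

lemma isRecolSeq_schedule {G : SimpleGraph (Fin n)} (he : Function.Injective e)
    (hind : ∀ j j', ¬ G.Adj (e j) (e j')) :
    IsRecolSeq (Wgraph n (s + 1) G) (n + (s + 1) + 1) (schedule e) (2 * s + 2 * (s + 1) ^ 2)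
      (Walpha n (s + 1)) (Wbeta n (s + 1)) :=
  ⟨schedule_zero e, schedule_end e, fun m _ => isKColoring_schedule he hind m,
    fun _ _ _ _ hu hw => eq_of_schedule_ne hu hw⟩

end Wgraph

/-- If `G` has an independent set of size at least `t - 1`, then there is an
`(n+t+1)`-recoloring sequence for `G'` from `α` to `β` of length at most `2t + 2t²`. -/
theorem stmt_7 (n t : ℕ) (ht : 1 ≤ t) (G : SimpleGraph (Fin n))
    (S : Finset (Fin n)) (hScard : t - 1 ≤ S.card)
    (hSind : ∀ u ∈ S, ∀ v ∈ S, ¬ G.Adj u v) :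
    ∃ ℓ ≤ 2 * t + 2 * t ^ 2, ∃ seq : ℕ → GV n t → ℕ,
      IsRecolSeq (Wgraph n t G) (n + t + 1) seq ℓ (Walpha n t) (Wbeta n t) := by
  obtain ⟨s, rfl⟩ : ∃ s, t = s + 1 := ⟨t - 1, by omega⟩
  have hs : s ≤ S.card := hScard
  let e := S.orderEmbOfCardLe hs
  have hind : ∀ j j', ¬ G.Adj (e j) (e j') := fun j j' =>
    hSind _ (S.orderEmbOfCardLe_mem hs j) _ (S.orderEmbOfCardLe_mem hs j')
  exact ⟨_, by omega, _, Wgraph.isRecolSeq_schedule e e.injective hind⟩
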